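/- Let n ≥ p ≥ 1, α = √2/2, β = 1 − √2/2, and let X ∈ ℝ^{n×p} satisfy XᵀX = I_p. For 1 ≤ u ≤ n, 1 ≤ v ≤ p set W_{uv} = E_{uv} − α X E_{uv}ᵀ X − β X Xᵀ E_{uv}. Then the Stratonovich-to-Itô drift correction satisfies ∑_{u=1}^{n} ∑_{v=1}^{p} [ −α (W_{uv} E_{uv}ᵀ X + X E_{uv}ᵀ W_{uv}) − β (W_{uv} Xᵀ E_{uv} + X W_{uv}ᵀ E_{uv}) ] = −(n−1) X. -/

import Mathlib

/-!
Every term of the drift is a contraction `∑ᵤᵥ A E_{uv}^{(ᵀ)} B E_{uv}^{(ᵀ)} C` over the matrix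
units, and each such contraction collapses to a scalar multiple of the identity, a transpose or
a trace (`∑ E Eᵀ = p I`, `∑ Eᵀ E = n I`, `∑ Eᵀ A Eᵀ = Aᵀ`, `∑ E B E = Bᵀ`, `∑ Eᵀ C E = tr C · I`).
With `XᵀX = I` (so `tr (X Xᵀ) = p`), each of the four sums making up the drift is a multiple of
`X`, and for arbitrary `α, β` the drift is `c(α, β, n, p) X`. The particular values
`α = √2/2`, `β = 1 - √2/2` satisfy `α + β = 1` and `2α² = 1`, which kill every dependence of
`c` on `p` and leave `c = 1 - n`.
-/

open Matrix

/-- The projected field `P_{uv}(X) = E_{uv} - α X E_{uv}ᵀ X - β X Xᵀ E_{uv}` with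
`α = √2/2`, `β = 1 - √2/2`. -/
noncomputable def projField {n p : ℕ} (X : Matrix (Fin n) (Fin p) ℝ)
    (u : Fin n) (v : Fin p) : Matrix (Fin n) (Fin p) ℝ :=
  Matrix.single u v (1 : ℝ)
    - (Real.sqrt 2 / 2) • (X * (Matrix.single u v (1 : ℝ))ᵀ * X)
    - (1 - Real.sqrt 2 / 2) • (X * Xᵀ * Matrix.single u v (1 : ℝ))

namespace Matrix

variable {m k R : Type*} [Fintype m] [Fintype k] [DecidableEq m] [DecidableEq k] [CommRing R]

theorem sum_single_mul_transpose_single :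
    ∑ u : m, ∑ v : k, single u v (1 : R) * (single u v (1 : R))ᵀ = (Fintype.card k : R) • 1 := by
  ext i j
  simp [sum_apply, mul_apply, single, one_apply, ite_and, eq_comm]

theorem sum_transpose_single_mul_single :
    ∑ u : m, ∑ v : k, (single u v (1 : R))ᵀ * single u v (1 : R) = (Fintype.card m : R) • 1 := by
  ext i j
  simp [sum_apply, mul_apply, single, one_apply, ite_and, eq_comm]

theorem sum_transpose_single_mul_mul_transpose_single (A : Matrix m k R) :
    ∑ u : m, ∑ v : k, (single u v (1 : R))ᵀ * A * (single u v (1 : R))ᵀ = Aᵀ := by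
  ext i j
  simp [sum_apply, mul_apply, single, ite_and, mul_ite, ite_mul]

theorem sum_single_mul_mul_single (B : Matrix k m R) :
    ∑ u : m, ∑ v : k, single u v (1 : R) * B * single u v (1 : R) = Bᵀ := by
  ext i j
  simp [sum_apply, mul_apply, single, ite_and, mul_ite, ite_mul]

theorem sum_transpose_single_mul_mul_single (C : Matrix m m R) :
    ∑ u : m, ∑ v : k, (single u v (1 : R))ᵀ * C * single u v (1 : R)
      = trace C • (1 : Matrix k k R) := by
  ext i j
  simp [sum_apply, mul_apply, single, one_apply, trace, ite_and, eq_comm, mul_ite, ite_mul]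

omit [DecidableEq m] in
theorem trace_mul_transpose_of_transpose_mul_eq_one {X : Matrix m k R} (hX : Xᵀ * X = 1) :
    trace (X * Xᵀ) = Fintype.card k := by
  rw [trace_mul_comm, hX, trace_one]

noncomputable def projFieldWith (α β : R) (X : Matrix m k R) (u : m) (v : k) : Matrix m k R :=
  single u v (1 : R) - α • (X * (single u v (1 : R))ᵀ * X) - β • (X * Xᵀ * single u v (1 : R))

section Stiefel

variable {X : Matrix m k R} (α β : R)

theorem sum_projFieldWith_mul_transpose_single_mul (hX : Xᵀ * X = 1) :
    ∑ u : m, ∑ v : k, projFieldWith α β X u v * (single u v (1 : R))ᵀ * X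
      = ((Fintype.card k : R) - α - β * Fintype.card k) • X := by
  calc _ = (∑ u : m, ∑ v : k, single u v (1 : R) * (single u v (1 : R))ᵀ) * X
        - α • (X * (∑ u : m, ∑ v : k, (single u v (1 : R))ᵀ * X * (single u v (1 : R))ᵀ) * X)
        - β • (X * Xᵀ * (∑ u : m, ∑ v : k, single u v (1 : R) * (single u v (1 : R))ᵀ) * X) := by
        simp only [projFieldWith, Matrix.sub_mul, Matrix.smul_mul, Matrix.mul_sum, Matrix.sum_mul,
          Finset.sum_sub_distrib, Finset.smul_sum, Matrix.mul_assoc]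
    _ = _ := by
        rw [sum_single_mul_transpose_single, sum_transpose_single_mul_mul_transpose_single]
        simp only [Matrix.mul_smul, Matrix.smul_mul, Matrix.mul_one, Matrix.one_mul,
          Matrix.mul_assoc, hX]
        module

theorem sum_mul_transpose_single_mul_projFieldWith (hX : Xᵀ * X = 1) :
    ∑ u : m, ∑ v : k, X * (single u v (1 : R))ᵀ * projFieldWith α β X u v
      = ((Fintype.card m : R) - α - β * Fintype.card k) • X := by
  calc _ = X * (∑ u : m, ∑ v : k, (single u v (1 : R))ᵀ * single u v (1 : R))
        - α • (X * (∑ u : m, ∑ v : k, (single u v (1 : R))ᵀ * X * (single u v (1 : R))ᵀ) * X)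
        - β • (X * (∑ u : m, ∑ v : k, (single u v (1 : R))ᵀ * (X * Xᵀ) * single u v (1 : R))) := by
        simp only [projFieldWith, Matrix.mul_sub, Matrix.mul_smul, Matrix.mul_sum, Matrix.sum_mul,
          Finset.sum_sub_distrib, Finset.smul_sum, Matrix.mul_assoc]
    _ = _ := by
        rw [sum_transpose_single_mul_single, sum_transpose_single_mul_mul_transpose_single,
          sum_transpose_single_mul_mul_single, trace_mul_transpose_of_transpose_mul_eq_one hX]
        simp only [Matrix.mul_smul, Matrix.mul_one, Matrix.mul_assoc, hX]
        module

theorem sum_projFieldWith_mul_transpose_mul_single (hX : Xᵀ * X = 1) :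
    ∑ u : m, ∑ v : k, projFieldWith α β X u v * Xᵀ * single u v (1 : R)
      = (1 - α * Fintype.card k - β) • X := by
  calc _ = (∑ u : m, ∑ v : k, single u v (1 : R) * Xᵀ * single u v (1 : R))
        - α • (X * (∑ u : m, ∑ v : k, (single u v (1 : R))ᵀ * (X * Xᵀ) * single u v (1 : R)))
        - β • (X * Xᵀ * (∑ u : m, ∑ v : k, single u v (1 : R) * Xᵀ * single u v (1 : R))) := by
        simp only [projFieldWith, Matrix.sub_mul, Matrix.smul_mul, Matrix.mul_sum,
          Finset.sum_sub_distrib, Finset.smul_sum, Matrix.mul_assoc]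
    _ = _ := by
        rw [sum_single_mul_mul_single, sum_transpose_single_mul_mul_single,
          trace_mul_transpose_of_transpose_mul_eq_one hX, transpose_transpose]
        simp only [Matrix.mul_smul, Matrix.mul_one, Matrix.mul_assoc, hX]
        module

theorem sum_mul_transpose_projFieldWith_mul_single (hX : Xᵀ * X = 1) :
    ∑ u : m, ∑ v : k, X * (projFieldWith α β X u v)ᵀ * single u v (1 : R)
      = ((Fintype.card m : R) - α - β * Fintype.card k) • X := by
  calc _ = X * (∑ u : m, ∑ v : k, (single u v (1 : R))ᵀ * single u v (1 : R))
        - α • (X * Xᵀ * (∑ u : m, ∑ v : k, single u v (1 : R) * Xᵀ * single u v (1 : R)))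
        - β • (X * (∑ u : m, ∑ v : k, (single u v (1 : R))ᵀ * (X * Xᵀ) * single u v (1 : R))) := by
        simp only [projFieldWith, transpose_sub, transpose_smul, transpose_mul, transpose_transpose,
          Matrix.sub_mul, Matrix.mul_sub, Matrix.smul_mul, Matrix.mul_smul, Matrix.mul_sum,
          Finset.sum_sub_distrib, Finset.smul_sum, Matrix.mul_assoc]
    _ = _ := by
        rw [sum_transpose_single_mul_single, sum_single_mul_mul_single,
          sum_transpose_single_mul_mul_single, trace_mul_transpose_of_transpose_mul_eq_one hX,
          transpose_transpose]
        simp only [Matrix.mul_smul, Matrix.mul_one, Matrix.mul_assoc, hX]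
        module

theorem sum_ito_correction_projFieldWith (hX : Xᵀ * X = 1) :
    ∑ u : m, ∑ v : k,
      ((-α) • (projFieldWith α β X u v * (single u v (1 : R))ᵀ * X
          + X * (single u v (1 : R))ᵀ * projFieldWith α β X u v)
        + (-β) • (projFieldWith α β X u v * Xᵀ * single u v (1 : R)
          + X * (projFieldWith α β X u v)ᵀ * single u v (1 : R)))
      = (-α * (Fintype.card m + Fintype.card k - 2 * α - 2 * β * Fintype.card k)
          - β * (Fintype.card m + 1 - α - β - (α + β) * Fintype.card k)) • X := by
  simp only [Finset.sum_add_distrib, ← Finset.smul_sum,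
    sum_projFieldWith_mul_transpose_single_mul α β hX,
    sum_mul_transpose_single_mul_projFieldWith α β hX,
    sum_projFieldWith_mul_transpose_mul_single α β hX,
    sum_mul_transpose_projFieldWith_mul_single α β hX]
  module

end Stiefel

end Matrix

theorem ito_drift_correction_general (n p : ℕ)
    (X : Matrix (Fin n) (Fin p) ℝ) (hX : Xᵀ * X = 1) :
    ∑ u : Fin n, ∑ v : Fin p,
      ((-(Real.sqrt 2 / 2)) • (projField X u v * (Matrix.single u v (1 : ℝ))ᵀ * X
          + X * (Matrix.single u v (1 : ℝ))ᵀ * projField X u v)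
        + (-(1 - Real.sqrt 2 / 2)) • (projField X u v * Xᵀ * Matrix.single u v (1 : ℝ)
          + X * (projField X u v)ᵀ * Matrix.single u v (1 : ℝ)))
      = (-((n : ℝ) - 1)) • X := by
  refine (sum_ito_correction_projFieldWith (Real.sqrt 2 / 2) (1 - Real.sqrt 2 / 2) hX).trans ?_
  rw [Fintype.card_fin, Fintype.card_fin]
  congr 1
  linear_combination ((1 - (p : ℝ)) / 2) * Real.sq_sqrt (zero_le_two : (0 : ℝ) ≤ 2)

/-- the Stratonovich-to-Itô drift correction equals `-(n-1) X`. -/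
theorem ito_drift_correction (n p : ℕ) (hp : 1 ≤ p) (hpn : p ≤ n)
    (X : Matrix (Fin n) (Fin p) ℝ) (hX : Xᵀ * X = 1) :
    ∑ u : Fin n, ∑ v : Fin p,
      ((-(Real.sqrt 2 / 2)) • (projField X u v * (Matrix.single u v (1 : ℝ))ᵀ * X
          + X * (Matrix.single u v (1 : ℝ))ᵀ * projField X u v)
        + (-(1 - Real.sqrt 2 / 2)) • (projField X u v * Xᵀ * Matrix.single u v (1 : ℝ)
          + X * (projField X u v)ᵀ * Matrix.single u v (1 : ℝ)))
      = (-((n : ℝ) - 1)) • X :=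
  ito_drift_correction_general n p X hX
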